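/- For every n ≥ 3 and every k with 1 ≤ k ≤ n-1 (both parities of k), the number of permutations of {1,…,n} with exactly n-k cycles (including fixed points) equals a(n,k) + a(n,k-1); equivalently, c(n,n-k) = a(n,k) + a(n,k-1) where c(n,j) is the unsigned Stirling number of the first kind. -/

import Mathlib

/-- The set `T(A_n) = {(1 2)(i j) : 1 ≤ i < j ≤ n}` of A-transpositions, viewed inside
`Equiv.Perm (Fin n)` (letter `k` corresponds to `(k-1 : Fin n)`). -/
def ATrans (n : ℕ) : Set (Equiv.Perm (Fin n)) :=
  {v | ∃ (h1 : 1 < n) (i j : Fin n), i < j ∧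
       v = Equiv.swap (⟨0, by omega⟩ : Fin n) ⟨1, h1⟩ * Equiv.swap i j}

/-- Length of a permutation with respect to the generating set `T(A_n)`. -/
noncomputable def alen (n : ℕ) (v : Equiv.Perm (Fin n)) : ℕ :=
  sInf {k | ∃ l : List (Equiv.Perm (Fin n)),
    (∀ x ∈ l, x ∈ ATrans n) ∧ l.length = k ∧ l.prod = v}

/-- `a(n,m)`: the number of elements of `A_n` of length `m` w.r.t. `T(A_n)`. -/
noncomputable def aCount (n m : ℕ) : ℕ :=
  Nat.card {v : Equiv.Perm (Fin n) // v ∈ alternatingGroup (Fin n) ∧ alen n v = m}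

/-- `cyc(v)`: the number of cycles of `v` including fixed points, i.e. the number of
orbits of the cyclic group generated by `v` acting on `Fin n`. -/
noncomputable def cycNum (n : ℕ) (v : Equiv.Perm (Fin n)) : ℕ :=
  Nat.card (MulAction.orbitRel.Quotient (Subgroup.zpowers v) (Fin n))

/-!
Write `d v = n - cyc v`. The orbits of `⟨v, (a b)⟩` are those of `v` with the orbits of `a` and
`b` merged, and each of them is a union of orbits of `(a b) v`. Hence `cyc` drops by at most one
when `v` is multiplied by a transposition, and rises by exactly one under `v ↦ (x (v x)) v`, which
splits `x` off its cycle. So `d v` is the least number of transpositions with product `v`,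
`sign v = (-1) ^ d v`, and `d ((a b) v) = d v ± 1`.

Since `T(A_n) = s • {transpositions}` for `s = (1 2)` and transpositions are closed under
conjugation, a product of `k` elements of `T(A_n)` is `s ^ k` times a product of `k`
transpositions. So an even `v` has length `min (d v) (d (s v))`, the smaller of two consecutive
numbers, and sending `v` to whichever of `v`, `s v` is even identifies the permutations with
`d v = k` with the even `u` such that `k ∈ {d u, d (s u)}`, i.e. of length `k` or `k - 1`.
-/

open Equiv Equiv.Perm MulAction Subgroup
open scoped Pointwise

namespace Setoid

variable {α : Type*}

def mergeClasses (r : Setoid α) (a b : α) : Setoid α where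
  r x y := r x y ∨ (r x a ∨ r x b) ∧ (r y a ∨ r y b)
  iseqv := by
    refine ⟨fun x => Or.inl (r.refl x), fun h => ?_, fun hxy hyz => ?_⟩
    · rcases h with h | ⟨hx, hy⟩
      exacts [Or.inl (r.symm h), Or.inr ⟨hy, hx⟩]
    · have htrans : ∀ {x y z}, r x y → r y z → r x z := r.trans
      have hsymm : ∀ {x y}, r x y → r y x := r.symm
      grind

theorem le_mergeClasses (r : Setoid α) (a b : α) : r ≤ r.mergeClasses a b :=
  fun _ _ h => Or.inl h

theorem mergeClasses_rel (r : Setoid α) (a b : α) : r.mergeClasses a b a b :=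
  Or.inr ⟨Or.inl (r.refl a), Or.inr (r.refl b)⟩

theorem mergeClasses_eq_self {r : Setoid α} {a b : α} (h : r a b) : r.mergeClasses a b = r := by
  refine le_antisymm (fun x y hxy => ?_) (r.le_mergeClasses a b)
  have htrans : ∀ {x y z}, r x y → r y z → r x z := r.trans
  have hsymm : ∀ {x y}, r x y → r y x := r.symm
  change r x y ∨ _ at hxy
  grind

theorem card_quotient_mergeClasses [Finite α] {r : Setoid α} {a b : α} (h : ¬ r a b) :
    Nat.card (Quotient r) = Nat.card (Quotient (r.mergeClasses a b)) + 1 := by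
  classical
  let f (c : {c : Quotient r // c ≠ ⟦b⟧}) : Quotient (r.mergeClasses a b) :=
    map_of_le (r.le_mergeClasses a b) c
  have hf : Function.Bijective f := by
    constructor
    · rintro ⟨c, hc⟩ ⟨c', hc'⟩ hcc'
      induction c using Quotient.inductionOn with | h x => ?_
      induction c' using Quotient.inductionOn with | h y => ?_
      have hxb : ¬ r x b := fun h' => hc (Quotient.sound h')
      have hyb : ¬ r y b := fun h' => hc' (Quotient.sound h')
      rcases Quotient.exact hcc' with hxy | ⟨hx, hy⟩
      · exact Subtype.ext (Quotient.sound hxy)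
      · exact Subtype.ext <| Quotient.sound <|
          r.trans (hx.resolve_right hxb) (r.symm (hy.resolve_right hyb))
    · intro d
      induction d using Quotient.inductionOn with | h z => ?_
      by_cases hz : r z b
      · refine ⟨⟨⟦a⟧, fun h' => h (Quotient.exact h')⟩, Quotient.sound ?_⟩
        exact Or.inr ⟨Or.inl (r.refl a), Or.inr hz⟩
      · exact ⟨⟨⟦z⟧, fun h' => hz (Quotient.exact h')⟩, rfl⟩
  rw [← Nat.card_congr (Equiv.optionSubtypeNe (⟦b⟧ : Quotient r)), Finite.card_option,
    Nat.card_eq_of_bijective f hf]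

def classStabilizer (r : Setoid α) : Subgroup (Perm α) where
  carrier := {g | ∀ x, r (g x) x}
  mul_mem' hg hh x := r.trans (hg _) (hh x)
  one_mem' x := r.refl x
  inv_mem' {g} hg x := by simpa using r.symm (hg (g⁻¹ x))

end Setoid

namespace Equiv.Perm

variable {α : Type*}

theorem orbitRel_mono {K H : Subgroup (Perm α)} (h : K ≤ H) : orbitRel K α ≤ orbitRel H α :=
  fun _ _ ⟨g, hg⟩ => ⟨⟨g, h g.2⟩, hg⟩

theorem card_orbitRel_quotient_le_of_le [Finite α] {K H : Subgroup (Perm α)} (h : K ≤ H) :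
    Nat.card (orbitRel.Quotient H α) ≤ Nat.card (orbitRel.Quotient K α) :=
  Nat.card_le_card_of_surjective (Setoid.map_of_le (orbitRel_mono h))
    (Quotient.ind fun x => ⟨⟦x⟧, rfl⟩)

theorem orbitRel_le_of_le_classStabilizer {G : Subgroup (Perm α)} {r : Setoid α}
    (h : G ≤ r.classStabilizer) : orbitRel G α ≤ r :=
  fun _ y ⟨g, hg⟩ => hg ▸ h g.2 y

noncomputable def numCycles (v : Perm α) : ℕ := Nat.card (orbitRel.Quotient (zpowers v) α)

theorem numCycles_le_card [Fintype α] (v : Perm α) : numCycles v ≤ Fintype.card α :=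
  Nat.card_eq_fintype_card (α := α) ▸ Nat.card_le_card_of_surjective _ Quotient.mk''_surjective

theorem numCycles_one [Fintype α] : numCycles (1 : Perm α) = Fintype.card α := by
  rw [numCycles, ← Nat.card_eq_fintype_card]
  refine (Nat.card_eq_of_bijective
    (fun x => (⟦x⟧ : orbitRel.Quotient (zpowers (1 : Perm α)) α))
    ⟨fun x y h => ?_, Quotient.mk''_surjective⟩).symm
  obtain ⟨⟨g, hg⟩, rfl⟩ := Quotient.exact h
  rw [zpowers_one_eq_bot, mem_bot] at hg
  simp [hg]

section

variable [DecidableEq α]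

theorem IsSwap.conj {t : Perm α} (ht : t.IsSwap) (g : Perm α) : (g * t * g⁻¹).IsSwap := by
  obtain ⟨i, j, hij, rfl⟩ := ht
  exact ⟨g i, g j, g.injective.ne hij, (swap_apply_apply g i j).symm⟩

theorem IsSwap.pow_mul_eq_ite {s : Perm α} (hs : s.IsSwap) (k : ℕ) (v : Perm α) :
    s ^ k * v = if Even k then v else s * v := by
  obtain ⟨a, b, -, rfl⟩ := hs
  obtain ⟨m, rfl | rfl⟩ := Nat.even_or_odd' k
  · simp [pow_mul, sq]
  · simp [pow_succ, pow_mul]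

theorem orbitRel_sup_zpowers_swap (K : Subgroup (Perm α)) (a b : α) :
    orbitRel ↥(K ⊔ zpowers (swap a b)) α = (orbitRel K α).mergeClasses a b := by
  refine le_antisymm (orbitRel_le_of_le_classStabilizer ?_) ?_
  · refine sup_le (fun g hg x => Or.inl ⟨⟨g, hg⟩, rfl⟩) (zpowers_le.2 fun x => ?_)
    rcases eq_or_ne x a with rfl | hxa
    · simpa using ((orbitRel K α).mergeClasses x b).symm ((orbitRel K α).mergeClasses_rel x b)
    rcases eq_or_ne x b with rfl | hxb
    · simpa using (orbitRel K α).mergeClasses_rel a x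
    · simp [swap_apply_of_ne_of_ne hxa hxb, Setoid.refl]
  · have hab : orbitRel ↥(K ⊔ zpowers (swap a b)) α a b :=
      ⟨⟨swap a b, mem_sup_right (mem_zpowers _)⟩, swap_apply_right a b⟩
    rintro x y (hxy | ⟨hx, hy⟩)
    · exact orbitRel_mono le_sup_left hxy
    · set r := orbitRel ↥(K ⊔ zpowers (swap a b)) α
      have hK : ∀ {x y}, orbitRel K α x y → r x y := fun h => orbitRel_mono le_sup_left h
      have htrans : ∀ {x y z}, r x y → r y z → r x z := r.trans
      have hsymm : ∀ {x y}, r x y → r y x := r.symm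
      grind

theorem card_orbitRel_quotient_sup_zpowers_swap_of_rel {K : Subgroup (Perm α)} {a b : α}
    (h : orbitRel K α a b) :
    Nat.card (orbitRel.Quotient ↥(K ⊔ zpowers (swap a b)) α) =
      Nat.card (orbitRel.Quotient K α) := by
  rw [orbitRel.Quotient, orbitRel_sup_zpowers_swap, Setoid.mergeClasses_eq_self h]

section

variable [Finite α]

theorem card_orbitRel_quotient_sup_zpowers_swap_of_not_rel {K : Subgroup (Perm α)} {a b : α}
    (h : ¬ orbitRel K α a b) :
    Nat.card (orbitRel.Quotient K α) =
      Nat.card (orbitRel.Quotient ↥(K ⊔ zpowers (swap a b)) α) + 1 := by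
  rw [orbitRel.Quotient, orbitRel.Quotient, orbitRel_sup_zpowers_swap]
  exact Setoid.card_quotient_mergeClasses h

theorem card_orbitRel_quotient_le_sup_zpowers_swap_add_one (K : Subgroup (Perm α)) (a b : α) :
    Nat.card (orbitRel.Quotient K α) ≤
      Nat.card (orbitRel.Quotient ↥(K ⊔ zpowers (swap a b)) α) + 1 := by
  by_cases h : orbitRel K α a b
  · exact (card_orbitRel_quotient_sup_zpowers_swap_of_rel h).ge.trans (Nat.le_succ _)
  · exact (card_orbitRel_quotient_sup_zpowers_swap_of_not_rel h).le

theorem numCycles_le_numCycles_swap_mul_add_one (v : Perm α) (a b : α) :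
    numCycles v ≤ numCycles (swap a b * v) + 1 := by
  have hle : zpowers (swap a b * v) ≤ zpowers v ⊔ zpowers (swap a b) :=
    zpowers_le.2 (mul_mem (mem_sup_right (mem_zpowers _)) (mem_sup_left (mem_zpowers _)))
  exact (card_orbitRel_quotient_le_sup_zpowers_swap_add_one _ a b).trans
    (Nat.add_le_add_right (card_orbitRel_quotient_le_of_le hle) 1)

theorem numCycles_swap_apply_mul {v : Perm α} {x : α} (hx : v x ≠ x) :
    numCycles (swap x (v x) * v) = numCycles v + 1 := by
  set w := swap x (v x) * v
  have hwx : w x = x := by simp [w]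
  have hsup : zpowers w ⊔ zpowers (swap x (v x)) = zpowers v ⊔ zpowers (swap x (v x)) := by
    refine le_antisymm (sup_le (zpowers_le.2 ?_) le_sup_right)
      (sup_le (zpowers_le.2 ?_) le_sup_right)
    · exact mul_mem (mem_sup_right (mem_zpowers _)) (mem_sup_left (mem_zpowers _))
    · have h : swap x (v x) * w ∈ zpowers w ⊔ zpowers (swap x (v x)) :=
        mul_mem (mem_sup_right (mem_zpowers _)) (mem_sup_left (mem_zpowers _))
      simpa [w, ← mul_assoc] using h
  have hv : orbitRel (zpowers v) α x (v x) := ⟨⟨v⁻¹, inv_mem (mem_zpowers v)⟩, by simp⟩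
  have hw : ¬ orbitRel (zpowers w) α x (v x) := by
    rintro ⟨⟨_, m, rfl⟩, hm⟩
    refine hx ((w ^ m).injective ?_)
    change (w ^ m) (v x) = x at hm
    rw [hm, zpow_apply_eq_self_of_apply_eq_self hwx]
  rw [numCycles, numCycles, card_orbitRel_quotient_sup_zpowers_swap_of_not_rel hw, hsup,
    card_orbitRel_quotient_sup_zpowers_swap_of_rel hv]

end

variable [Fintype α]

theorem card_le_numCycles_prod_add_length {l : List (Perm α)} (hl : ∀ t ∈ l, t.IsSwap) :
    Fintype.card α ≤ numCycles l.prod + l.length := by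
  induction l with
  | nil => simp [numCycles_one]
  | cons t l ih =>
    obtain ⟨a, b, -, rfl⟩ := hl t List.mem_cons_self
    have hl' := ih fun t ht => hl t (List.mem_cons_of_mem _ ht)
    have hstep := numCycles_le_numCycles_swap_mul_add_one l.prod a b
    simp only [List.prod_cons, List.length_cons]
    omega

theorem exists_swap_list_length_eq (v : Perm α) :
    ∃ l : List (Perm α), (∀ t ∈ l, t.IsSwap) ∧
      l.length = Fintype.card α - numCycles v ∧ l.prod = v := by
  induction hN : v.support.card using Nat.strong_induction_on generalizing v with
  | _ N ih =>
  by_cases hv : v = 1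
  · exact ⟨[], by simp, by simp [hv, numCycles_one], by simp [hv]⟩
  obtain ⟨x, hx⟩ : ∃ x, v x ≠ x := by
    by_contra! h
    exact hv (Equiv.ext h)
  obtain ⟨l, hl, hlen, hprod⟩ :=
    ih _ (hN ▸ card_support_swap_mul hx) (swap x (v x) * v) rfl
  refine ⟨swap x (v x) :: l, ?_, ?_, by simp [hprod]⟩
  · intro t ht
    rcases List.mem_cons.1 ht with rfl | ht
    exacts [⟨x, v x, hx.symm, rfl⟩, hl t ht]
  · have := numCycles_le_card (swap x (v x) * v)
    simp only [List.length_cons, hlen, numCycles_swap_apply_mul hx] at this ⊢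
    omega

theorem sign_eq_neg_one_pow_card_sub_numCycles (v : Perm α) :
    sign v = (-1) ^ (Fintype.card α - numCycles v) := by
  obtain ⟨l, hl, hlen, rfl⟩ := exists_swap_list_length_eq v
  rw [sign_prod_list_swap hl, hlen]

theorem even_card_sub_numCycles_iff (v : Perm α) :
    Even (Fintype.card α - numCycles v) ↔ sign v = 1 := by
  rw [sign_eq_neg_one_pow_card_sub_numCycles, neg_one_pow_eq_one_iff_even (by decide)]

theorem IsSwap.numCycles_mul_eq_add_one_or {s : Perm α} (hs : s.IsSwap) (v : Perm α) :
    numCycles (s * v) = numCycles v + 1 ∨ numCycles v = numCycles (s * v) + 1 := by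
  obtain ⟨a, b, hab, rfl⟩ := hs
  have hle := numCycles_le_numCycles_swap_mul_add_one v a b
  have hge := numCycles_le_numCycles_swap_mul_add_one (swap a b * v) a b
  rw [swap_mul_self_mul] at hge
  have hne : numCycles (swap a b * v) ≠ numCycles v := by
    intro h
    have := sign_eq_neg_one_pow_card_sub_numCycles (swap a b * v)
    rw [h, ← sign_eq_neg_one_pow_card_sub_numCycles, sign_mul, sign_swap hab,
      neg_one_mul] at this
    exact units_ne_neg_self _ this.symm
  omega

theorem IsSwap.card_numCycles_eq {s : Perm α} (hs : s.IsSwap) (c : ℕ) :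
    Nat.card {v : Perm α // numCycles v = c} =
      Nat.card {u : Perm α // sign u = 1 ∧ (numCycles u = c ∨ numCycles (s * u) = c)} := by
  have hsign (u : Perm α) : sign (s * u) = -sign u := by
    rw [sign_mul, hs.sign_eq, neg_one_mul]
  have hne (u : Perm α) : numCycles (s * u) ≠ numCycles u := by
    have := hs.numCycles_mul_eq_add_one_or u
    omega
  have hss (u : Perm α) : s * (s * u) = u := by
    obtain ⟨a, b, -, rfl⟩ := hs
    exact swap_mul_self_mul a b u
  refine Nat.card_congr
    { toFun := fun v => ⟨if sign v.1 = 1 then v else s * v, ?_⟩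
      invFun := fun u => ⟨if numCycles u.1 = c then u else s * u, ?_⟩
      left_inv := fun v => ?_
      right_inv := fun u => ?_ }
  · obtain ⟨v, hv⟩ := v
    split_ifs with h
    · exact ⟨h, Or.inl hv⟩
    · rw [hsign, Int.units_ne_iff_eq_neg.1 h, hss]
      exact ⟨neg_neg 1, Or.inr hv⟩
  · obtain ⟨u, -, hu⟩ := u
    split_ifs with h
    · exact h
    · exact hu.resolve_left h
  · obtain ⟨v, hv⟩ := v
    by_cases h : sign v = 1
    · simp [h, hv]
    · simp [h, hv.symm ▸ hne v, hss]
  · obtain ⟨u, hu, hc⟩ := u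
    by_cases h : numCycles u = c
    · simp [h, hu]
    · simp [h, hsign, hu, hss]

end

end Equiv.Perm

theorem exists_list_prod_smul_set_iff {G : Type*} [Group G] {S : Set G}
    (hS : ∀ g, ∀ t ∈ S, g * t * g⁻¹ ∈ S) (s v : G) (k : ℕ) :
    (∃ l : List G, (∀ x ∈ l, x ∈ s • S) ∧ l.length = k ∧ l.prod = v) ↔
      ∃ l : List G, (∀ t ∈ l, t ∈ S) ∧ l.length = k ∧ l.prod = s⁻¹ ^ k * v := by
  induction k generalizing v with
  | zero => simp [List.length_eq_zero_iff, eq_comm]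
  | succ k ih =>
    constructor
    · rintro ⟨_ | ⟨x, l⟩, hl, hlen, rfl⟩
      · simp at hlen
      obtain ⟨t, ht, rfl⟩ := Set.mem_smul_set.1 (hl x List.mem_cons_self)
      obtain ⟨u, hu, hulen, hprod⟩ :=
        (ih l.prod).1
          ⟨l, fun y hy => hl y (List.mem_cons_of_mem _ hy), by simpa using hlen, rfl⟩
      refine ⟨(s⁻¹ ^ k * t * (s⁻¹ ^ k)⁻¹) :: u, ?_, by simpa using hulen, ?_⟩
      · intro y hy
        rcases List.mem_cons.1 hy with rfl | hy
        exacts [hS _ t ht, hu y hy]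
      · simp only [List.prod_cons, hprod, smul_eq_mul]
        group
    · rintro ⟨_ | ⟨t, u⟩, hu, hlen, hprod⟩
      · simp at hlen
      have ht := hu t List.mem_cons_self
      obtain ⟨l, hl, hllen, hlprod⟩ := (ih (s ^ k * u.prod)).2
        ⟨u, fun y hy => hu y (List.mem_cons_of_mem _ hy), by simpa using hlen, by group⟩
      refine ⟨(s * (s ^ k * t * (s ^ k)⁻¹)) :: l, ?_, by simpa using hllen, ?_⟩
      · intro y hy
        rcases List.mem_cons.1 hy with rfl | hy
        exacts [Set.smul_mem_smul_set (hS _ t ht), hl y hy]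
      · rw [List.prod_cons] at hprod
        have hv : v = s ^ (k + 1) * (t * u.prod) := by rw [hprod]; group
        rw [List.prod_cons, hlprod, hv]
        group

section

variable {n : ℕ}

def swap01 (h : 1 < n) : Perm (Fin n) := swap ⟨0, by omega⟩ ⟨1, h⟩

theorem isSwap_swap01 (h : 1 < n) : (swap01 h).IsSwap :=
  ⟨_, _, by simp [Fin.ext_iff], rfl⟩

theorem ATrans_eq_smul (h : 1 < n) : ATrans n = swap01 h • {t | t.IsSwap} := by
  ext x
  rw [Set.mem_smul_set]
  constructor
  · rintro ⟨-, i, j, hij, rfl⟩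
    exact ⟨swap i j, ⟨i, j, hij.ne, rfl⟩, rfl⟩
  · rintro ⟨_, ⟨i, j, hij, rfl⟩, rfl⟩
    rcases hij.lt_or_gt with hij | hij
    · exact ⟨h, i, j, hij, rfl⟩
    · exact ⟨h, j, i, hij, by rw [swap_comm]; rfl⟩

theorem exists_ATrans_list_iff (h : 1 < n) (v : Perm (Fin n)) (k : ℕ) :
    (∃ l : List (Perm (Fin n)), (∀ x ∈ l, x ∈ ATrans n) ∧ l.length = k ∧ l.prod = v) ↔
      ∃ l : List (Perm (Fin n)), (∀ t ∈ l, t.IsSwap) ∧ l.length = k ∧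
        l.prod = swap01 h ^ k * v := by
  rw [ATrans_eq_smul h, exists_list_prod_smul_set_iff fun g t ht => ht.conj g, swap01, swap_inv]
  rfl

theorem alen_eq_min (h : 1 < n) {v : Perm (Fin n)} (hv : sign v = 1) :
    alen n v = min (n - numCycles v) (n - numCycles (swap01 h * v)) := by
  have hcard := Fintype.card_fin n
  have hsign : sign (swap01 h * v) = -1 := by
    rw [Perm.sign_mul, (isSwap_swap01 h).sign_eq, hv]
    rfl
  have heven : Even (n - numCycles v) := by
    simpa [hcard] using (even_card_sub_numCycles_iff v).2 hv
  have hodd : ¬ Even (n - numCycles (swap01 h * v)) := by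
    have := (even_card_sub_numCycles_iff (swap01 h * v)).not.2 (by rw [hsign]; decide)
    rwa [hcard] at this
  have hmem : ∃ l : List (Perm (Fin n)), (∀ x ∈ l, x ∈ ATrans n) ∧
      l.length = min (n - numCycles v) (n - numCycles (swap01 h * v)) ∧ l.prod = v := by
    rw [exists_ATrans_list_iff h, (isSwap_swap01 h).pow_mul_eq_ite]
    rcases min_choice (n - numCycles v) (n - numCycles (swap01 h * v)) with hmin | hmin <;>
      rw [hmin]
    · simpa [heven, hcard] using exists_swap_list_length_eq v
    · simpa [hodd, hcard] using exists_swap_list_length_eq (swap01 h * v)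
  refine le_antisymm (Nat.sInf_le hmem) (le_csInf ⟨_, hmem⟩ fun k hk => ?_)
  obtain ⟨l, hl, rfl, hprod⟩ := (exists_ATrans_list_iff h v k).1 hk
  have := card_le_numCycles_prod_add_length hl
  rw [hprod, (isSwap_swap01 h).pow_mul_eq_ite, hcard] at this
  split_ifs at this <;> omega

end

theorem stmt_12_general (n : ℕ) (k : ℕ) (hk1 : 1 ≤ k) (hk2 : k ≤ n - 1) :
    Nat.card {v : Equiv.Perm (Fin n) // cycNum n v = n - k}
      = aCount n k + aCount n (k - 1) := by
  classical
  have h : 1 < n := by omega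
  have hdisj : Disjoint
      (fun v : Equiv.Perm (Fin n) => v ∈ alternatingGroup (Fin n) ∧ alen n v = k)
      (fun v => v ∈ alternatingGroup (Fin n) ∧ alen n v = k - 1) := by
    rw [disjoint_iff_inf_le]
    rintro v ⟨⟨-, hv⟩, -, hv'⟩
    omega
  rw [aCount, aCount, ← Nat.card_sum, ← Nat.card_congr (subtypeOrEquiv _ _ hdisj)]
  change Nat.card {v // numCycles v = n - k} = _
  rw [(isSwap_swap01 h).card_numCycles_eq]
  refine Nat.card_congr (Equiv.subtypeEquivRight fun u => ?_)
  rw [mem_alternatingGroup, ← and_or_left, and_congr_right_iff]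
  intro hu
  have hmin := alen_eq_min h hu
  have hstep := (isSwap_swap01 h).numCycles_mul_eq_add_one_or u
  have hle₀ := numCycles_le_card u
  have hle₁ := numCycles_le_card (swap01 h * u)
  rw [Fintype.card_fin] at hle₀ hle₁
  omega

/-- For `n ≥ 3` and `1 ≤ k ≤ n - 1` (both parities of `k`), the number of permutations
of `{1,…,n}` with exactly `n - k` cycles equals `a(n,k) + a(n,k-1)`, i.e.
`c(n, n-k) = a(n,k) + a(n,k-1)`. -/
theorem stmt_12 (n : ℕ) (hn : 3 ≤ n) (k : ℕ) (hk1 : 1 ≤ k) (hk2 : k ≤ n - 1) :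
    Nat.card {v : Equiv.Perm (Fin n) // cycNum n v = n - k}
      = aCount n k + aCount n (k - 1) :=
  stmt_12_general n k hk1 hk2
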